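/- arXiv:1705.05060 — 2 statements merged into one kernel-verified Lean document; each statement's English description precedes it below -/
import Mathlib

section
/- For k in the column interval C_i of the AIR matrix, writing k mod (D+1−λ_{2i−1}) = c·λ_{2i} + d with 0 ≤ d < λ_{2i}, the down-distance satisfies d_down(k) = K − D − 1 + λ_{2i+1} + (β_{2i} − 1 − c)·λ_{2i}; in particular d_down(k) ≤ K − gcd(K, D+1). -/
/-- Euclidean chain: `lam K D 0 = λ_{-1} = D+1`, `lam K D 1 = λ_0 = K-D-1`, and
`lam K D (i+1) = λ_i` is the remainder of `λ_{i-2}` divided by `λ_{i-1}`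
(with the convention that once a term is `0`, all later terms are `0`). -/
def lam (K D : ℕ) : ℕ → ℕ
  | 0 => D + 1
  | 1 => K - D - 1
  | (n + 2) => if lam K D (n + 1) = 0 then 0 else lam K D n % lam K D (n + 1)

/-- The AIR (Adjacent-Row-Independent) matrix construction: `airFill m n j k = true`
iff the `(j,k)` entry of the `m × n` AIR matrix is `1`.  The first `m - m % n` rows
are stacked `n × n` identities; the remaining `(m % n) × n` part is the transpose of
the `n × (m % n)` AIR matrix. -/
def airFill : ℕ → ℕ → ℕ → ℕ → Bool
  | m, n, j, k =>
    if h : n = 0 then false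
    else if j < m - m % n then decide (j % n = k)
    else airFill n (m % n) k (j - (m - m % n))
  termination_by m n _ _ => n
  decreasing_by exact Nat.mod_lt _ (Nat.pos_of_ne_zero h)

/-- Down-distance: distance from the diagonal `1` at `(k,k)` to the lowest `1`
in column `k` of the `K × (D+1)` AIR matrix. -/
def ddown (K D k : ℕ) : ℕ :=
  (((Finset.range K).filter (fun j => airFill K (D+1) j k = true)).sup id) - k

/-- Up-distance: distance from the `1` at `(j,k)` to the nearest `1` above it in column `k`. -/
def dup (K D j k : ℕ) : ℕ :=
  j - (((Finset.range j).filter (fun j' => airFill K (D+1) j' k = true)).sup id)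

/-- Right-distance: distance from the `1` at `(j,k)` to the nearest `1` to its right in row `j`. -/
noncomputable def dright (K D j k : ℕ) : ℕ :=
  sInf {k' : ℕ | k < k' ∧ airFill K (D+1) j k' = true} - k


section AuxAIR
set_option linter.unusedVariables false

lemma airFill_eq (m n j k : ℕ) : airFill m n j k = if n = 0 then false
    else if j < m - m % n then decide (j % n = k)
    else airFill n (m % n) k (j - (m - m % n)) := by
  rw [airFill]; simp

def maxrow (m n k : ℕ) : ℕ :=
  ((Finset.range m).filter (fun j => airFill m n j k = true)).sup id

lemma sub_mod_le (m n : ℕ) (hn : 0 < n) (hnm : n ≤ m) : n ≤ m - m % n := by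
  have h0 := Nat.div_add_mod m n
  have h2 : 1 ≤ m / n := (Nat.one_le_div_iff hn).2 hnm
  have h3 : n * 1 ≤ n * (m / n) := Nat.mul_le_mul_left _ h2
  have h4 := Nat.mod_lt m hn
  generalize n * (m / n) = A at h0 h3
  omega

lemma airFill_diag (m n k : ℕ) (hn : 0 < n) (hnm : n ≤ m) (hk : k < n) :
    airFill m n k k = true := by
  have h1 := sub_mod_le m n hn hnm
  rw [airFill_eq, if_neg (by omega), if_pos (by omega)]
  simp [Nat.mod_eq_of_lt hk]

lemma sup_filter_mem {S : Finset ℕ} (h : S.Nonempty) : S.sup id ∈ S := by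
  obtain ⟨b, hb, he⟩ := Finset.exists_mem_eq_sup S h id
  rw [he]; exact hb

lemma maxrow_eq_of (m n k X : ℕ) (hX : X < m) (hfill : airFill m n X k = true)
    (hub : ∀ j, j < m → airFill m n j k = true → j ≤ X) :
    maxrow m n k = X := by
  apply le_antisymm
  · exact Finset.sup_le fun j hj => by
      simp only [Finset.mem_filter, Finset.mem_range] at hj
      exact hub j hj.1 hj.2
  · exact Finset.le_sup (f := id) (by simp [Finset.mem_filter, hX, hfill])

-- Lemma C : exact division
lemma maxrow_dvd (m n k : ℕ) (hn : 0 < n) (hnm : n ≤ m) (hr : m % n = 0) (hk : k < n) :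
    maxrow m n k = m - n + k := by
  apply maxrow_eq_of
  · omega
  · rw [airFill_eq, if_neg (by omega), if_pos (by omega)]
    obtain ⟨q, hq⟩ : n ∣ m - n := Nat.dvd_sub (Nat.dvd_of_mod_eq_zero hr) dvd_rfl
    rw [hq, Nat.mul_add_mod]
    simp [Nat.mod_eq_of_lt hk]
  · intro j hj hf
    rw [airFill_eq, if_neg (by omega), if_pos (by omega)] at hf
    simp at hf
    have h1 : j = n * (j / n) + k := by rw [← hf]; exact (Nat.div_add_mod j n).symm
    have h2 : j / n < m / n :=
      Nat.div_lt_div_of_lt_of_dvd (Nat.dvd_of_mod_eq_zero hr) hj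
    have h3 : n * (m / n) = m := by
      have := Nat.div_add_mod m n; omega
    have key : n * (j / n) + n ≤ m := by
      rw [← h3]
      calc n * (j / n) + n = n * (j / n + 1) := by ring
        _ ≤ n * (m / n) := Nat.mul_le_mul_left _ (by omega)
    generalize n * (j / n) = A at h1 key
    omega

-- Lemma A : top region of the bottom block
lemma maxrow_top (m n k : ℕ) (hn : 0 < n) (hnm : n ≤ m) (hr : m % n ≠ 0)
    (hk : k + n % (m % n) < n) :
    maxrow m n k = m - m % n + k % (m % n) := by
  have hrm : m % n < n := Nat.mod_lt m hn
  have hrpos : 0 < m % n := Nat.pos_of_ne_zero hr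
  have hkr : k % (m % n) < m % n := Nat.mod_lt k hrpos
  apply maxrow_eq_of
  · omega
  · rw [airFill_eq, if_neg (by omega), if_neg (by omega)]
    have he : m - m % n + k % (m % n) - (m - m % n) = k % (m % n) := by omega
    rw [he, airFill_eq, if_neg (by omega), if_pos (by omega)]
    simp
  · intro j hj hf
    rcases lt_or_ge j (m - m % n) with h | h
    · omega
    · rw [airFill_eq, if_neg (by omega), if_neg (by omega)] at hf
      rw [airFill_eq, if_neg (by omega), if_pos (by omega)] at hf
      simp at hf
      omega

-- Lemma B : recursion into the doubly-nested block
lemma maxrow_rec (m n k : ℕ) (hn : 0 < n) (hnm : n ≤ m) (hr : m % n ≠ 0)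
    (hs : n % (m % n) ≠ 0) (hk1 : n - n % (m % n) ≤ k) (hk2 : k < n) :
    maxrow m n k = m - m % n + maxrow (m % n) (n % (m % n)) (k - (n - n % (m % n))) := by
  have hrm : m % n < n := Nat.mod_lt m hn
  have hsr : n % (m % n) < m % n := Nat.mod_lt n (Nat.pos_of_ne_zero hr)
  have hk's : k - (n - n % (m % n)) < n % (m % n) := by omega
  obtain ⟨R, hR⟩ : ∃ R, R = maxrow (m % n) (n % (m % n)) (k - (n - n % (m % n))) := ⟨_, rfl⟩
  rw [maxrow] at hR
  have hmem : R < m % n ∧ airFill (m % n) (n % (m % n)) R (k - (n - n % (m % n))) = true := by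
    have hne : ((Finset.range (m % n)).filter
        (fun j => airFill (m % n) (n % (m % n)) j (k - (n - n % (m % n))) = true)).Nonempty :=
      ⟨k - (n - n % (m % n)), by
        simp only [Finset.mem_filter, Finset.mem_range]
        exact ⟨by omega,
          airFill_diag _ _ _ (Nat.pos_of_ne_zero hs) (le_of_lt hsr) hk's⟩⟩
    have hx := sup_filter_mem hne
    rw [← hR] at hx
    simp only [Finset.mem_filter, Finset.mem_range] at hx
    exact hx
  have hub' : ∀ j', j' < m % n →
      airFill (m % n) (n % (m % n)) j' (k - (n - n % (m % n))) = true → j' ≤ R := by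
    intro j' h1 h2
    rw [hR]
    exact Finset.le_sup (f := id)
      (by simp only [Finset.mem_filter, Finset.mem_range]; exact ⟨h1, h2⟩)
  have hgoal : maxrow m n k = m - m % n + R := by
    apply maxrow_eq_of
    · omega
    · rw [airFill_eq, if_neg (by omega), if_neg (by omega)]
      have he : m - m % n + R - (m - m % n) = R := by omega
      rw [he, airFill_eq, if_neg (by omega), if_neg (by omega)]
      exact hmem.2
    · intro j hj hf
      rcases lt_or_ge j (m - m % n) with h | h
      · omega
      · rw [airFill_eq, if_neg (by omega), if_neg (by omega)] at hf
        rw [airFill_eq, if_neg (by omega), if_neg (by omega)] at hf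
        have := hub' (j - (m - m % n)) (by omega) hf
        omega
  rw [hgoal, maxrow, ← hR]

def ech (m n : ℕ) : ℕ → ℕ
  | 0 => m
  | 1 => n
  | (j + 2) => if ech m n (j + 1) = 0 then 0 else ech m n j % ech m n (j + 1)

lemma ech_shift (m n : ℕ) (hn : n ≠ 0) : ∀ j, ech m n (j + 1) = ech n (m % n) j
  | 0 => rfl
  | 1 => by simp [ech, hn]
  | (j + 2) => by
    have h1 := ech_shift m n hn j
    have h2 := ech_shift m n hn (j + 1)
    show ech m n ((j + 1) + 2) = ech n (m % n) (j + 2)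
    conv_lhs => rw [ech]
    conv_rhs => rw [ech]
    rw [h1, h2]

lemma ech_zero_succ (m n : ℕ) : ∀ j, 1 ≤ j → ech m n j = 0 → ech m n (j + 1) = 0
  | 1, _, h => by rw [show (1:ℕ)+1 = 0+2 from rfl, ech, h]; simp
  | (j + 2), _, h => by rw [show j+2+1 = (j+1)+2 from rfl, ech, h]; simp

lemma ech_ne_zero_of_le (m n : ℕ) {a b : ℕ} (ha : 1 ≤ a) (hab : a ≤ b)
    (h : ech m n b ≠ 0) : ech m n a ≠ 0 := by
  induction b with
  | zero => omega
  | succ b ih =>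
    rcases Nat.lt_or_ge a (b + 1) with hlt | hge
    · have hb1 : 1 ≤ b := by omega
      apply ih (by omega)
      intro hz
      exact h (ech_zero_succ m n b hb1 hz)
    · have : a = b + 1 := by omega
      rwa [this]

lemma ech_succ_le (m n : ℕ) : ∀ j, 1 ≤ j → ech m n (j + 1) ≤ ech m n j
  | 1, _ => by
    show ech m n (0 + 2) ≤ ech m n 1
    conv_lhs => rw [ech]
    split
    · omega
    · exact le_of_lt (Nat.mod_lt _ (by omega))
  | (j + 2), _ => by
    show ech m n ((j+1) + 2) ≤ ech m n (j + 2)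
    conv_lhs => rw [ech]
    split
    · omega
    · exact le_of_lt (Nat.mod_lt _ (by omega))

lemma ech_anti (m n : ℕ) {a b : ℕ} (ha : 1 ≤ a) (hab : a ≤ b) :
    ech m n b ≤ ech m n a := by
  induction b with
  | zero => omega
  | succ b ih =>
    rcases Nat.lt_or_ge a (b + 1) with hlt | hge
    · exact le_trans (ech_succ_le m n b (by omega)) (ih (by omega))
    · have : a = b + 1 := by omega
      rw [this]

lemma ech_div_identity (m n : ℕ) (j : ℕ) (h : ech m n (j + 1) ≠ 0) :
    ech m n j = ech m n (j + 1) * (ech m n j / ech m n (j + 1)) + ech m n (j + 2) := by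
  rw [ech, if_neg h]
  exact (Nat.div_add_mod _ _).symm

lemma ech_two (m n : ℕ) (hn : n ≠ 0) : ech m n 2 = m % n := by
  show ech m n (0 + 2) = m % n
  rw [ech]; simp [ech, hn]

lemma ech_three (m n : ℕ) (hn : n ≠ 0) (h2 : m % n ≠ 0) : ech m n 3 = n % (m % n) := by
  show ech m n (1 + 2) = n % (m % n)
  rw [ech, ech_two m n hn, if_neg h2]
  have h1 : ech m n 1 = n := rfl
  rw [h1]

lemma ech_shift2 (m n : ℕ) (hn : n ≠ 0) (h2 : m % n ≠ 0) (j : ℕ) :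
    ech m n (j + 2) = ech (m % n) (n % (m % n)) j := by
  rw [ech_shift m n hn (j + 1), ech_shift n (m % n) h2 j]

lemma main_lemma : ∀ t m n c d : ℕ, 0 < n → n < m → ech m n (2*t+2) ≠ 0 →
    d < ech m n (2*t+2) →
    (n - ech m n (2*t+1)) + c * ech m n (2*t+2) + d + ech m n (2*t+3) < n →
    maxrow m n ((n - ech m n (2*t+1)) + c * ech m n (2*t+2) + d)
      = (m - n) + ech m n (2*t+3)
        + (ech m n (2*t+1) / ech m n (2*t+2) - 1 - c) * ech m n (2*t+2)
        + ((n - ech m n (2*t+1)) + c * ech m n (2*t+2) + d) := by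
  intro t
  induction t with
  | zero =>
    intro m n c d hn hnm h2 hd hub
    have hn0 : n ≠ 0 := by omega
    have he1 : ech m n (2*0+1) = n := rfl
    have he2 : ech m n (2*0+2) = m % n := ech_two m n hn0
    have hr : m % n ≠ 0 := by rw [← he2]; exact h2
    have he3 : ech m n (2*0+3) = n % (m % n) := ech_three m n hn0 hr
    simp only [he1, he2, he3, Nat.sub_self, Nat.zero_add] at hd hub ⊢
    have hmr : m % n < n := Nat.mod_lt m hn
    have hkmod : (c * (m % n) + d) % (m % n) = d := by
      rw [Nat.mul_add_mod', Nat.mod_eq_of_lt hd]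
    rw [maxrow_top m n _ hn (by omega) hr (by omega), hkmod]
    have hdiv : n = (m % n) * (n / (m % n)) + n % (m % n) := (Nat.div_add_mod n (m % n)).symm
    have hclt : c + 1 ≤ n / (m % n) := by
      by_contra hcon
      push_neg at hcon
      have h4 : n / (m % n) ≤ c := by omega
      have h5 : (m % n) * (n / (m % n)) ≤ (m % n) * c := Nat.mul_le_mul_left _ h4
      have h6 : (m % n) * c = c * (m % n) := mul_comm _ _
      omega
    have hfin : n = (n / (m % n) - 1 - c) * (m % n) + c * (m % n) + (m % n) + n % (m % n) := by
      calc n = (m % n) * (n / (m % n)) + n % (m % n) := hdiv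
        _ = (m % n) * ((n / (m % n) - 1 - c) + c + 1) + n % (m % n) := by
            congr 2; omega
        _ = (n / (m % n) - 1 - c) * (m % n) + c * (m % n) + (m % n) + n % (m % n) := by ring
    generalize (n / (m % n) - 1 - c) * (m % n) = P at hfin ⊢
    generalize c * (m % n) = Q at hfin hub ⊢
    omega
  | succ t ih =>
    intro m n c d hn hnm h24 hd hub
    simp only [show 2*(t+1)+1 = 2*t+3 from by ring, show 2*(t+1)+2 = 2*t+4 from by ring,
      show 2*(t+1)+3 = 2*t+5 from by ring] at h24 hd hub ⊢
    have hn0 : n ≠ 0 := by omega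
    have h2 : ech m n 2 ≠ 0 := ech_ne_zero_of_le m n (by omega) (by omega) h24
    have h3 : ech m n 3 ≠ 0 := ech_ne_zero_of_le m n (by omega) (by omega) h24
    have he2 : ech m n 2 = m % n := ech_two m n hn0
    have hr : m % n ≠ 0 := by rwa [he2] at h2
    have he3 : ech m n 3 = n % (m % n) := ech_three m n hn0 hr
    have hs : n % (m % n) ≠ 0 := by rwa [he3] at h3
    have hE3le : ech m n (2*t+3) ≤ n % (m % n) := by
      rw [← he3]; exact ech_anti m n (by omega) (by omega)
    have hmr : m % n < n := Nat.mod_lt m hn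
    have hsr : n % (m % n) < m % n := Nat.mod_lt n (Nat.pos_of_ne_zero hr)
    have hsh1 : ech (m % n) (n % (m % n)) (2*t+1) = ech m n (2*t+3) :=
      (ech_shift2 m n hn0 hr (2*t+1)).symm
    have hsh2 : ech (m % n) (n % (m % n)) (2*t+2) = ech m n (2*t+4) :=
      (ech_shift2 m n hn0 hr (2*t+2)).symm
    have hsh3 : ech (m % n) (n % (m % n)) (2*t+3) = ech m n (2*t+5) :=
      (ech_shift2 m n hn0 hr (2*t+3)).symm
    have hklo : n - n % (m % n) ≤ (n - ech m n (2*t+3)) + c * ech m n (2*t+4) + d := by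
      generalize c * ech m n (2*t+4) = Q
      omega
    have hkhi : (n - ech m n (2*t+3)) + c * ech m n (2*t+4) + d < n := by
      generalize c * ech m n (2*t+4) = Q at hub ⊢
      omega
    rw [maxrow_rec m n _ hn (le_of_lt hnm) hr hs hklo hkhi]
    have hkshift : (n - ech m n (2*t+3)) + c * ech m n (2*t+4) + d - (n - n % (m % n))
        = (n % (m % n) - ech m n (2*t+3)) + c * ech m n (2*t+4) + d := by
      generalize c * ech m n (2*t+4) = Q
      omega
    rw [hkshift]
    have ihh := ih (m % n) (n % (m % n)) c d (Nat.pos_of_ne_zero hs) hsr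
      (by rw [hsh2]; exact h24) (by rw [hsh2]; exact hd)
      (by rw [hsh1, hsh2, hsh3]
          generalize c * ech m n (2*t+4) = Q at hub ⊢
          omega)
    rw [hsh1, hsh2, hsh3] at ihh
    rw [ihh]
    generalize (ech m n (2*t+3) / ech m n (2*t+4) - 1 - c) * ech m n (2*t+4) = W
    generalize c * ech m n (2*t+4) = Q at hub ⊢
    omega

lemma lam_zero_succ (K D : ℕ) (j : ℕ) (h : lam K D (j + 1) = 0) : lam K D (j + 2) = 0 := by
  rw [lam, if_pos h]

-- simpler: nonzero downward
lemma lam_ne_zero_down (K D : ℕ) : ∀ b, lam K D (b + 1) ≠ 0 → ∀ a, a ≤ b → lam K D (a + 1) ≠ 0 := by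
  intro b
  induction b with
  | zero => intro h a ha; have : a = 0 := by omega
            rwa [this]
  | succ b ih =>
    intro h a ha
    rcases Nat.lt_or_ge a (b + 1) with h1 | h1
    · refine ih ?_ a (by omega)
      intro hz
      exact h (lam_zero_succ K D b hz)
    · have : a = b + 1 := by omega
      rwa [this]

lemma lam_add_two_le (K D : ℕ) (j : ℕ) : lam K D (j + 2) ≤ lam K D j := by
  rw [lam]
  split
  · omega
  · exact Nat.mod_le _ _

lemma lam_even_le (K D : ℕ) : ∀ a b, a ≤ b → lam K D (2 * b) ≤ lam K D (2 * a) := by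
  intro a b hab
  induction b with
  | zero => have : a = 0 := by omega
            rw [this]
  | succ b ih =>
    rcases Nat.lt_or_ge a (b + 1) with h1 | h1
    · calc lam K D (2 * (b + 1)) = lam K D (2 * b + 2) := by ring_nf
        _ ≤ lam K D (2 * b) := lam_add_two_le K D _
        _ ≤ lam K D (2 * a) := ih (by omega)
    · have : a = b + 1 := by omega
      rw [this]

lemma lam_div_identity (K D : ℕ) (j : ℕ) (h : lam K D (j + 1) ≠ 0) :
    lam K D j = lam K D (j + 1) * (lam K D j / lam K D (j + 1)) + lam K D (j + 2) := by
  rw [lam, if_neg h]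
  exact (Nat.div_add_mod _ _).symm

lemma gcd_dvd_lam (K D : ℕ) : ∀ j, Nat.gcd K (D + 1) ∣ lam K D j
  | 0 => Nat.gcd_dvd_right K (D + 1)
  | 1 => by
      show Nat.gcd K (D + 1) ∣ K - D - 1
      rw [Nat.sub_sub]
      exact Nat.dvd_sub (Nat.gcd_dvd_left K (D + 1)) (Nat.gcd_dvd_right K (D + 1))
  | (j + 2) => by
      rw [lam]
      split
      · exact dvd_zero _
      · exact (Nat.dvd_mod_iff (gcd_dvd_lam K D (j + 1))).2 (gcd_dvd_lam K D j)

lemma alignA (K D : ℕ) (h1 : D + 1 < K) (h2 : K < 2 * (D + 1)) :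
    ∀ j, lam K D j = ech K (D + 1) (j + 1)
  | 0 => rfl
  | 1 => by
      show K - D - 1 = ech K (D + 1) (0 + 2)
      rw [ech]
      have hne : ech K (D + 1) (0 + 1) = D + 1 := rfl
      rw [hne, if_neg (by omega)]
      show K - D - 1 = K % (D + 1)
      rw [Nat.mod_eq_sub_mod (by omega : D + 1 ≤ K), Nat.mod_eq_of_lt (by omega)]
      omega
  | (j + 2) => by
      have ha := alignA K D h1 h2 j
      have hb := alignA K D h1 h2 (j + 1)
      show lam K D (j + 2) = ech K (D + 1) ((j + 1) + 2)
      rw [lam]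
      conv_rhs => rw [ech]
      rw [← ha, ← hb]

lemma alignC (K D : ℕ) (h2 : 2 * (D + 1) < K) :
    ∀ j, lam K D (j + 2) = ech K (D + 1) (j + 1)
  | 0 => by
      show lam K D (0 + 2) = D + 1
      rw [lam]
      have h1 : lam K D (0 + 1) = K - D - 1 := rfl
      have h0 : lam K D 0 = D + 1 := rfl
      rw [h1, h0, if_neg (by omega)]
      exact Nat.mod_eq_of_lt (by omega)
  | 1 => by
      show lam K D (1 + 2) = ech K (D + 1) (0 + 2)
      rw [lam, ech]
      have ha : lam K D (1 + 1) = D + 1 := alignC K D h2 0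
      have hb : lam K D 1 = K - D - 1 := rfl
      have hc : ech K (D + 1) (0 + 1) = D + 1 := rfl
      have hd : ech K (D + 1) 0 = K := rfl
      rw [ha, hb, hc, hd, if_neg (by omega), if_neg (by omega)]
      rw [Nat.mod_eq_sub_mod (by omega : D + 1 ≤ K)]
      have he : K - (D + 1) = K - D - 1 := by omega
      rw [he]
  | (j + 2) => by
      have ha := alignC K D h2 j
      have hb := alignC K D h2 (j + 1)
      show lam K D ((j + 2) + 2) = ech K (D + 1) ((j + 1) + 2)
      rw [lam]
      conv_rhs => rw [ech]
      rw [← ha, ← hb]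

lemma lam_mod_lt (K D j : ℕ) (h : lam K D (j+1) ≠ 0) : lam K D (j+2) < lam K D (j+1) := by
  conv_lhs => rw [lam]
  rw [if_neg h]
  exact Nat.mod_lt _ (Nat.pos_of_ne_zero h)

lemma ddown_maxrow (K D k : ℕ) : ddown K D k = maxrow K (D+1) k - k := rfl

lemma formula_from_align (K D i t k c d : ℕ) (hDK : D + 1 < K)
    (hL1 : lam K D (2*i+1) ≠ 0)
    (e1 : lam K D (2*i) = ech K (D+1) (2*t+1))
    (e2 : lam K D (2*i+1) = ech K (D+1) (2*t+2))
    (e3 : lam K D (2*i+2) = ech K (D+1) (2*t+3))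
    (hkdec : k = (D + 1 - lam K D (2*i)) + c * lam K D (2*i+1) + d)
    (hd : d < lam K D (2*i+1))
    (hk2 : k + lam K D (2*i+2) ≤ D) :
    ddown K D k = K - D - 1 + lam K D (2*i+2)
      + (lam K D (2*i) / lam K D (2*i+1) - 1 - c) * lam K D (2*i+1) := by
  have hX : k = (D + 1 - ech K (D+1) (2*t+1)) + c * ech K (D+1) (2*t+2) + d := by
    rw [← e1, ← e2]; exact hkdec
  have hub : (D + 1 - ech K (D+1) (2*t+1)) + c * ech K (D+1) (2*t+2) + d
      + ech K (D+1) (2*t+3) < D + 1 := by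
    rw [← e1, ← e2, ← e3]
    rw [← e1, ← e2] at hX
    omega
  have hm := main_lemma t K (D+1) c d (by omega) hDK
    (by rw [← e2]; exact hL1) (by rw [← e2]; exact hd) hub
  rw [ddown_maxrow, hX, hm, e1, e2, e3]
  generalize (ech K (D+1) (2*t+1) / ech K (D+1) (2*t+2) - 1 - c) * ech K (D+1) (2*t+2) = W
  generalize c * ech K (D+1) (2*t+2) = R
  omega

lemma bound_part (K D i k c d : ℕ) (hDK : D + 1 < K)
    (hL1 : lam K D (2*i+1) ≠ 0)
    (hkdec : k = (D + 1 - lam K D (2*i)) + c * lam K D (2*i+1) + d)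
    (hk2 : k + lam K D (2*i+2) ≤ D)
    (hle : lam K D (2*i) ≤ D + 1)
    (hform : ddown K D k = K - D - 1 + lam K D (2*i+2)
      + (lam K D (2*i) / lam K D (2*i+1) - 1 - c) * lam K D (2*i+1)) :
    ddown K D k ≤ K - Nat.gcd K (D+1) := by
  have hid := lam_div_identity K D (2*i) (by rwa [show 2*i+1 = 2*i+1 from rfl] at hL1)
  have hg1 : Nat.gcd K (D+1) ≤ lam K D (2*i+1) :=
    Nat.le_of_dvd (Nat.pos_of_ne_zero hL1) (gcd_dvd_lam K D (2*i+1))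
  have hgK : Nat.gcd K (D+1) ≤ K - (D+1) := by
    apply Nat.le_of_dvd (by omega)
    exact Nat.dvd_sub (Nat.gcd_dvd_left K (D+1)) (Nat.gcd_dvd_right K (D+1))
  -- c + 1 ≤ lam (2i)/ lam(2i+1)
  have hclt : c + 1 ≤ lam K D (2*i) / lam K D (2*i+1) := by
    by_contra hcon
    push_neg at hcon
    have h4 : lam K D (2*i) / lam K D (2*i+1) ≤ c := by omega
    have h5 : lam K D (2*i+1) * (lam K D (2*i) / lam K D (2*i+1))
        ≤ lam K D (2*i+1) * c := Nat.mul_le_mul_left _ h4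
    have h6 : lam K D (2*i+1) * c = c * lam K D (2*i+1) := mul_comm _ _
    generalize lam K D (2*i+1) * (lam K D (2*i) / lam K D (2*i+1)) = Q at hid h5
    generalize c * lam K D (2*i+1) = R at hkdec h5 h6
    omega
  have hsplit : lam K D (2*i+1) * (lam K D (2*i) / lam K D (2*i+1))
      = (lam K D (2*i) / lam K D (2*i+1) - 1 - c) * lam K D (2*i+1)
        + c * lam K D (2*i+1) + lam K D (2*i+1) := by
    calc lam K D (2*i+1) * (lam K D (2*i) / lam K D (2*i+1))
        = lam K D (2*i+1) * ((lam K D (2*i) / lam K D (2*i+1) - 1 - c) + c + 1) := by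
          congr 1; omega
      _ = (lam K D (2*i) / lam K D (2*i+1) - 1 - c) * lam K D (2*i+1)
        + c * lam K D (2*i+1) + lam K D (2*i+1) := by ring
  rw [hform]
  generalize (lam K D (2*i) / lam K D (2*i+1) - 1 - c) * lam K D (2*i+1) = W at hsplit ⊢
  generalize c * lam K D (2*i+1) = R at hsplit hkdec
  generalize lam K D (2*i+1) * (lam K D (2*i) / lam K D (2*i+1)) = Q at hsplit hid
  omega

end AuxAIR

/-- Down-distance formula (Lemma 1): for `k` in the column interval `C_i`, writing
`k mod (D+1-λ_{2i-1}) = c·λ_{2i} + d` with `d < λ_{2i}`, one has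
`d_down(k) = K - D - 1 + λ_{2i+1} + (β_{2i} - 1 - c)·λ_{2i}`; in particular
`d_down(k) ≤ K - gcd(K, D+1)`. -/
theorem stmt6 (K D l i k c d : ℕ) (hDK : D + 1 < K)
    (hl : lam K D (l + 1) ≠ 0) (hl' : lam K D (l + 2) = 0)
    (hi : i ≤ (l+1)/2)
    (hk : (k : ℤ) ∈ Finset.Icc ((D : ℤ) - lam K D (2*i) + 1) ((D : ℤ) - lam K D (2*i+2)))
    (hmod : k % (D + 1 - lam K D (2*i)) = c * lam K D (2*i+1) + d)
    (hd : d < lam K D (2*i+1)) :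
    ddown K D k = K - D - 1 + lam K D (2*i+2)
        + (lam K D (2*i) / lam K D (2*i+1) - 1 - c) * lam K D (2*i+1) ∧
    ddown K D k ≤ K - Nat.gcd K (D+1) := by
  rw [Finset.mem_Icc] at hk
  obtain ⟨hka, hkb⟩ := hk
  have hk1 : D + 1 ≤ k + lam K D (2*i) := by push_cast at hka; omega
  have hk2 : k + lam K D (2*i+2) ≤ D := by push_cast at hkb; omega
  have hL1 : lam K D (2*i+1) ≠ 0 := by omega
  have l0 : lam K D 0 = D + 1 := rfl
  have l1 : lam K D 1 = K - D - 1 := rfl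
  have hL1ne : lam K D 1 ≠ 0 := by omega
  rcases lt_trichotomy K (2*(D+1)) with hA | hB | hC
  · -- K < 2(D+1)
    have e1 : lam K D (2*i) = ech K (D+1) (2*i+1) := alignA K D hDK hA (2*i)
    have e2 : lam K D (2*i+1) = ech K (D+1) (2*i+2) := by
      have := alignA K D hDK hA (2*i+1)
      rwa [show 2*i+1+1 = 2*i+2 from by omega] at this
    have e3 : lam K D (2*i+2) = ech K (D+1) (2*i+3) := by
      have := alignA K D hDK hA (2*i+2)
      rwa [show 2*i+2+1 = 2*i+3 from by omega] at this
    have hkdec : k = (D + 1 - lam K D (2*i)) + c * lam K D (2*i+1) + d := by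
      obtain hi0 | hip := Nat.eq_zero_or_pos i
      · subst hi0
        have hM : D + 1 - lam K D (2*0) = 0 := by
          rw [show lam K D (2*0) = D + 1 from l0]; omega
        rw [hM, Nat.mod_zero] at hmod
        rw [hM]
        omega
      · have hid : lam K D 0 = lam K D 1 * (lam K D 0 / lam K D 1) + lam K D 2 :=
          lam_div_identity K D 0 hL1ne
        have hb : 1 ≤ lam K D 0 / lam K D 1 :=
          (Nat.one_le_div_iff (Nat.pos_of_ne_zero hL1ne)).2 (by omega)
        have hQ : lam K D 1 * 1 ≤ lam K D 1 * (lam K D 0 / lam K D 1) :=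
          Nat.mul_le_mul_left _ hb
        have h2lt : lam K D 2 < lam K D 1 := lam_mod_lt K D 0 hL1ne
        have hev : lam K D (2*i) ≤ lam K D 2 := by
          have := lam_even_le K D 1 i hip
          rwa [show 2*1 = 2 from rfl] at this
        have hM : 2 * lam K D (2*i) < D + 1 := by
          generalize lam K D 1 * (lam K D 0 / lam K D 1) = Q at hid hQ
          omega
        have hmod2 : k % (D + 1 - lam K D (2*i)) = k - (D + 1 - lam K D (2*i)) := by
          rw [Nat.mod_eq_sub_mod (by omega), Nat.mod_eq_of_lt (by omega)]
        rw [hmod2] at hmod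
        omega
    have hform := formula_from_align K D i i k c d hDK hL1 e1 e2 e3 hkdec hd hk2
    have hle : lam K D (2*i) ≤ D + 1 := by
      have := lam_even_le K D 0 i (by omega)
      rwa [show 2*0 = 0 from rfl, l0] at this
    exact ⟨hform, bound_part K D i k c d hDK hL1 hkdec hk2 hle hform⟩
  · -- K = 2(D+1)
    have hl2 : lam K D (0+2) = 0 := by
      rw [lam, if_neg hL1ne, l0, l1, show K - D - 1 = D + 1 from by omega, Nat.mod_self]
    have hi0 : i = 0 := by
      rcases Nat.eq_zero_or_pos l with hl0 | hlp
      · omega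
      · exfalso
        apply hl
        have : ∀ b, lam K D (b + 2) = 0 := by
          intro b
          induction b with
          | zero => exact hl2
          | succ b ih => exact lam_zero_succ K D (b+1) ih
        have := this (l - 1)
        rwa [show l - 1 + 2 = l + 1 from by omega] at this
    subst hi0
    have hM : D + 1 - lam K D (2*0) = 0 := by
      rw [show lam K D (2*0) = D + 1 from l0]; omega
    rw [hM, Nat.mod_zero] at hmod
    have hlam1 : lam K D (2*0+1) = D + 1 := by
      rw [show lam K D (2*0+1) = K - D - 1 from l1]; omega
    have hc0 : c = 0 := by
      by_contra hc
      have : 1 ≤ c := by omega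
      have := Nat.mul_le_mul_right (lam K D (2*0+1)) this
      rw [Nat.one_mul] at this
      omega
    subst hc0
    have hdd : ddown K D k = K - D - 1 := by
      rw [ddown_maxrow, maxrow_dvd K (D+1) k (by omega) (by omega)
        (by rw [hB]; exact Nat.mul_mod_left 2 (D+1)) (by omega)]
      omega
    have hl2' : lam K D (2*0+2) = 0 := hl2
    have hdiv : lam K D (2*0) / lam K D (2*0+1) = 1 := by
      rw [show lam K D (2*0) = D+1 from l0, hlam1, Nat.div_self (by omega)]
    have hgcd : Nat.gcd K (D+1) = D + 1 := by
      rw [Nat.gcd_comm]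
      exact Nat.gcd_eq_left ⟨2, by rw [hB]; ring⟩
    constructor
    · rw [hdd, hl2', hdiv]
      simp
    · rw [hdd, hgcd]
      omega
  · -- K > 2(D+1)
    have hl2 : lam K D 2 = D + 1 := by
      have h := alignC K D hC 0
      rwa [show ech K (D+1) (0+1) = D + 1 from rfl] at h
    obtain hi0 | hip := Nat.eq_zero_or_pos i
    · exfalso
      subst hi0
      rw [show lam K D (2*0+2) = D + 1 from hl2] at hk2
      omega
    · obtain ⟨t, rfl⟩ : ∃ t, i = t + 1 := ⟨i - 1, by omega⟩
      have e1 : lam K D (2*(t+1)) = ech K (D+1) (2*t+1) := by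
        rw [show 2*(t+1) = 2*t+2 from by ring]
        exact alignC K D hC (2*t)
      have e2 : lam K D (2*(t+1)+1) = ech K (D+1) (2*t+2) := by
        rw [show 2*(t+1)+1 = (2*t+1)+2 from by ring]
        have := alignC K D hC (2*t+1)
        rwa [show 2*t+1+1 = 2*t+2 from by omega] at this
      have e3 : lam K D (2*(t+1)+2) = ech K (D+1) (2*t+3) := by
        rw [show 2*(t+1)+2 = (2*t+2)+2 from by ring]
        have := alignC K D hC (2*t+2)
        rwa [show 2*t+2+1 = 2*t+3 from by omega] at this
      have hkdec : k = (D + 1 - lam K D (2*(t+1))) + c * lam K D (2*(t+1)+1) + d := by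
        obtain ht0 | htp := Nat.eq_zero_or_pos t
        · subst ht0
          have hM : D + 1 - lam K D (2*(0+1)) = 0 := by
            rw [show lam K D (2*(0+1)) = D + 1 from hl2]; omega
          rw [hM, Nat.mod_zero] at hmod
          rw [hM]
          omega
        · have hL3ne : lam K D 3 ≠ 0 :=
            lam_ne_zero_down K D (2*(t+1)) hL1 2 (by omega)
          have hl2' : lam K D 2 = D + 1 := hl2
          have h2ne : lam K D 2 ≠ 0 := by omega
          have hid : lam K D 2 = lam K D 3 * (lam K D 2 / lam K D 3) + lam K D 4 :=
            lam_div_identity K D 2 hL3ne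
          have h3lt : lam K D 3 < lam K D 2 := lam_mod_lt K D 1 h2ne
          have h4lt : lam K D 4 < lam K D 3 := lam_mod_lt K D 2 hL3ne
          have hb : 1 ≤ lam K D 2 / lam K D 3 :=
            (Nat.one_le_div_iff (Nat.pos_of_ne_zero hL3ne)).2 (by omega)
          have hQ : lam K D 3 * 1 ≤ lam K D 3 * (lam K D 2 / lam K D 3) :=
            Nat.mul_le_mul_left _ hb
          have hev : lam K D (2*(t+1)) ≤ lam K D 4 := by
            have := lam_even_le K D 2 (t+1) (by omega)
            rwa [show 2*2 = 4 from rfl] at this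
          have hM : 2 * lam K D (2*(t+1)) < D + 1 := by
            generalize lam K D 3 * (lam K D 2 / lam K D 3) = Q at hid hQ
            omega
          have hmod2 : k % (D + 1 - lam K D (2*(t+1)))
              = k - (D + 1 - lam K D (2*(t+1))) := by
            rw [Nat.mod_eq_sub_mod (by omega), Nat.mod_eq_of_lt (by omega)]
          rw [hmod2] at hmod
          omega
      have hform := formula_from_align K D (t+1) t k c d hDK hL1 e1 e2 e3 hkdec hd hk2
      have hle : lam K D (2*(t+1)) ≤ D + 1 := by
        have := lam_even_le K D 1 (t+1) (by omega)
        rwa [show lam K D (2*1) = D + 1 from hl2] at this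
      exact ⟨hform, bound_part K D (t+1) k c d hDK hL1 hkdec hk2 hle hform⟩
end

section
/- In the AIR matrix L, if L(j,k) = 1 lies in an even submatrix with within-block column index k_R ∈ [0, (β_{2i}−1)λ_{2i} − 1], then the right-distance d_right(j,k) equals λ_{2i}; i.e., the next 1 in row j to the right of column k occurs exactly λ_{2i} columns later. -/
/-! ### Auxiliary machinery -/

/-- The Euclidean chain naturally attached to the `m × n` AIR matrix:
`n, m % n, n % (m % n), ...` (with the zero convention). -/
def chainE (m n : ℕ) : ℕ → ℕ
  | 0 => n
  | 1 => m % n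
  | (t + 2) => if chainE m n (t + 1) = 0 then 0 else chainE m n t % chainE m n (t + 1)

lemma air_top (m n j k : ℕ) (h0 : n ≠ 0) (h1 : j < m - m % n) :
    airFill m n j k = decide (j % n = k) := by
  conv_lhs => rw [airFill]
  simp [h0, h1]

lemma air_bot (m n j k : ℕ) (h0 : n ≠ 0) (h1 : ¬ j < m - m % n) :
    airFill m n j k = airFill n (m % n) k (j - (m - m % n)) := by
  conv_lhs => rw [airFill]
  simp [h0, h1]

lemma air_bound : ∀ n m j k, airFill m n j k = true → j < m ∧ k < n := by
  intro n
  induction n using Nat.strong_induction_on with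
  | _ n ih =>
    intro m j k h
    rw [airFill] at h
    split_ifs at h with h0 h1
    · have hk := of_decide_eq_true h
      have h2 : j % n < n := Nat.mod_lt _ (Nat.pos_of_ne_zero h0)
      have h3 : m % n ≤ m := Nat.mod_le m n
      omega
    · have hrec := ih (m % n) (Nat.mod_lt _ (Nat.pos_of_ne_zero h0)) n k (j - (m - m % n)) h
      have h3 : m % n ≤ m := Nat.mod_le m n
      omega

lemma chainE_succ_le (m n : ℕ) (hn : 0 < n) : ∀ t, chainE m n (t + 1) ≤ chainE m n t
  | 0 => le_of_lt (by simpa [chainE] using Nat.mod_lt m hn)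
  | (t + 1) => by
    show (if chainE m n (t + 1) = 0 then 0 else chainE m n t % chainE m n (t + 1)) ≤ _
    split_ifs with h
    · exact Nat.zero_le _
    · exact le_of_lt (Nat.mod_lt _ (Nat.pos_of_ne_zero h))

lemma chainE_anti (m n : ℕ) (hn : 0 < n) {s t : ℕ} (h : s ≤ t) :
    chainE m n t ≤ chainE m n s := by
  induction t with
  | zero => simp [Nat.le_zero.mp h]
  | succ t ih =>
    rcases Nat.eq_or_lt_of_le h with rfl | h'
    · rfl
    · exact le_trans (chainE_succ_le m n hn t) (ih (by omega))

lemma chainE_half (m n : ℕ) (hn : 0 < n) (t : ℕ) : 2 * chainE m n (t + 2) ≤ n := by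
  have h2 : chainE m n (t + 2) ≤ chainE m n 2 := chainE_anti m n hn (by omega)
  have : 2 * chainE m n 2 ≤ n := by
    show 2 * (if chainE m n 1 = 0 then 0 else chainE m n 0 % chainE m n 1) ≤ n
    split_ifs with h
    · omega
    · have e1 : chainE m n 1 = m % n := rfl
      have hlt : m % n < n := Nat.mod_lt m hn
      have h1 : chainE m n 0 % chainE m n 1 < chainE m n 1 := Nat.mod_lt _ (Nat.pos_of_ne_zero h)
      have hd := Nat.div_add_mod (chainE m n 0) (chainE m n 1)
      have hq : 1 ≤ chainE m n 0 / chainE m n 1 := by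
        rw [Nat.one_le_div_iff (Nat.pos_of_ne_zero h)]
        show chainE m n 1 ≤ n
        omega
      have : chainE m n 1 * 1 ≤ chainE m n 1 * (chainE m n 0 / chainE m n 1) :=
        Nat.mul_le_mul_left _ hq
      have e0 : chainE m n 0 = n := rfl
      omega
  omega

lemma chainE_shift (m n : ℕ) (h2 : chainE m n 2 ≠ 0) :
    ∀ t, chainE (chainE m n 1) (chainE m n 2) t = chainE m n (t + 2) := by
  intro t
  induction t using Nat.strong_induction_on with
  | _ t ih =>
    match t with
    | 0 => rfl
    | 1 =>
      show chainE m n 1 % chainE m n 2 = chainE m n 3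
      show _ = if chainE m n 2 = 0 then 0 else chainE m n 1 % chainE m n 2
      rw [if_neg h2]
    | (t + 2) =>
      show (if chainE (chainE m n 1) (chainE m n 2) (t + 1) = 0 then 0
            else chainE (chainE m n 1) (chainE m n 2) t % chainE (chainE m n 1) (chainE m n 2) (t + 1))
          = if chainE m n (t + 3) = 0 then 0 else chainE m n (t + 2) % chainE m n (t + 3)
      rw [ih t (by omega), ih (t + 1) (by omega)]

lemma air_GL : ∀ i m n j k, 0 < n →
    m - chainE m n (2 * i + 1) ≤ j →
    n - chainE m n (2 * i) ≤ k →
    k < n - chainE m n (2 * i) +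
        (chainE m n (2 * i) / chainE m n (2 * i + 1) - 1) * chainE m n (2 * i + 1) →
    airFill m n j k = true →
    sInf {k' : ℕ | k < k' ∧ airFill m n j k' = true} = k + chainE m n (2 * i + 1) := by
  intro i
  induction i with
  | zero =>
    intro m n j k hn hrow hcol hkR hjk
    have hn0 : n ≠ 0 := by omega
    have e0 : chainE m n (2 * 0) = n := rfl
    have e1 : chainE m n (2 * 0 + 1) = m % n := rfl
    rw [e0] at hcol hkR
    rw [e1] at hrow hkR ⊢
    have he0 : m % n ≠ 0 := by
      intro h
      rw [h] at hkR
      simp at hkR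
    have hepos : 0 < m % n := Nat.pos_of_ne_zero he0
    have hq2 : 2 ≤ n / (m % n) := by
      by_contra h
      have h1 : n / (m % n) - 1 = 0 := by omega
      rw [h1, zero_mul] at hkR
      omega
    have hdm := Nat.div_add_mod n (m % n)
    have hme : n % (m % n) < m % n := Nat.mod_lt _ hepos
    have hqe : (n / (m % n) - 1) * (m % n) + m % n = m % n * (n / (m % n)) := by
      have h1 : n / (m % n) - 1 + 1 = n / (m % n) := by omega
      calc (n / (m % n) - 1) * (m % n) + m % n = (n / (m % n) - 1 + 1) * (m % n) := by ring
        _ = m % n * (n / (m % n)) := by rw [h1]; ring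
    have htop : m % n * (n / (m % n)) = n - n % (m % n) := by
      have := Nat.div_add_mod n (m % n)
      omega
    have hkR' : k < (n / (m % n) - 1) * (m % n) := by omega
    have hrowm : ¬ j < m - m % n := by omega
    rw [air_bot m n j k hn0 hrowm] at hjk
    rw [air_top n (m % n) k _ he0 (by omega)] at hjk
    have hke : k % (m % n) = j - (m - m % n) := of_decide_eq_true hjk
    set S : Set ℕ := {k' : ℕ | k < k' ∧ airFill m n j k' = true} with hS
    have hmem : k + m % n ∈ S := by
      rw [hS]
      simp only [Set.mem_setOf_eq]
      refine ⟨by omega, ?_⟩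
      rw [air_bot m n j _ hn0 hrowm]
      rw [air_top n (m % n) _ _ he0 (by omega)]
      rw [decide_eq_true_iff, Nat.add_mod_right]
      exact hke
    set x := sInf S with hx
    have hxmem : x ∈ S := Nat.sInf_mem ⟨_, hmem⟩
    have hxle : x ≤ k + m % n := Nat.sInf_le hmem
    rw [hS] at hxmem
    simp only [Set.mem_setOf_eq] at hxmem
    obtain ⟨hkx, hax⟩ := hxmem
    rcases lt_or_ge x (k + m % n) with h | h
    · exfalso
      rw [air_bot m n j x hn0 hrowm] at hax
      rw [air_top n (m % n) x _ he0 (by omega)] at hax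
      have hxe : x % (m % n) = j - (m - m % n) := of_decide_eq_true hax
      have hmodeq : Nat.ModEq (m % n) k x := hke.trans hxe.symm
      have hdvd : (m % n) ∣ x - k := (Nat.modEq_iff_dvd' (le_of_lt hkx)).mp hmodeq
      have := Nat.le_of_dvd (by omega) hdvd
      omega
    · omega
  | succ i ih =>
    intro m n j k hn hrow hcol hkR hjk
    have hn0 : n ≠ 0 := by omega
    have h21 : 2 * (i + 1) = 2 * i + 2 := by omega
    have h22 : 2 * (i + 1) + 1 = 2 * i + 3 := by omega
    rw [h21] at hcol hkR
    rw [h22] at hrow ⊢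
    have h23 : 2 * i + 2 + 1 = 2 * i + 3 := by omega
    rw [h23] at hkR
    have hA3 : chainE m n (2 * i + 3) ≠ 0 := by
      intro h
      rw [h, Nat.div_zero, Nat.zero_sub, zero_mul] at hkR
      omega
    have hE3 : chainE m n 3 ≠ 0 := by
      have := chainE_anti m n hn (show 3 ≤ 2 * i + 3 by omega)
      omega
    have hE2 : chainE m n 2 ≠ 0 := by
      intro h
      apply hE3
      show (if chainE m n 2 = 0 then 0 else chainE m n 1 % chainE m n 2) = 0
      rw [if_pos h]
    have hE1 : m % n ≠ 0 := by
      intro h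
      apply hE2
      show (if chainE m n 1 = 0 then 0 else chainE m n 0 % chainE m n 1) = 0
      rw [show chainE m n 1 = m % n from rfl, if_pos h]
    have hE2eq : chainE m n 2 = n % (m % n) := by
      show (if chainE m n 1 = 0 then 0 else chainE m n 0 % chainE m n 1) = n % (m % n)
      rw [show chainE m n 1 = m % n from rfl, if_neg hE1]
      rfl
    have hA3le : chainE m n (2 * i + 3) ≤ m % n := by
      have := chainE_anti m n hn (show 1 ≤ 2 * i + 3 by omega)
      exact le_trans this (le_of_eq rfl)
    have hA2le : chainE m n (2 * i + 2) ≤ chainE m n 2 := chainE_anti m n hn (by omega)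
    have hE2len : chainE m n 2 ≤ n := chainE_anti m n hn (show 0 ≤ 2 by omega)
    have hmn : m % n ≤ m := Nat.mod_le m n
    have hrowm : ¬ j < m - m % n := by omega
    -- two-step unfolding
    have unfoldx : ∀ x, n - chainE m n 2 ≤ x →
        airFill m n j x
          = airFill (m % n) (chainE m n 2) (j - (m - m % n)) (x - (n - chainE m n 2)) := by
      intro x hxx
      rw [air_bot m n j x hn0 hrowm]
      rw [air_bot n (m % n) x _ hE1 (by rw [← hE2eq] at *; omega)]
      rw [← hE2eq]
    have hcol2 : n - chainE m n 2 ≤ k := by omega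
    have hjk' : airFill (m % n) (chainE m n 2) (j - (m - m % n)) (k - (n - chainE m n 2)) = true := by
      rw [← unfoldx k hcol2]; exact hjk
    have hshift := chainE_shift m n hE2
    rw [show chainE m n 1 = m % n from rfl] at hshift
    have h24 : 2 * i + 1 + 2 = 2 * i + 3 := by omega
    have hsub := ih (m % n) (chainE m n 2) (j - (m - m % n)) (k - (n - chainE m n 2))
      (Nat.pos_of_ne_zero hE2)
      (by rw [hshift (2 * i + 1), h24]; omega)
      (by rw [hshift (2 * i)]; omega)
      (by rw [hshift (2 * i), hshift (2 * i + 1), h24]; omega)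
      hjk'
    rw [hshift (2 * i + 1), h24] at hsub
    have hA3pos : 0 < chainE m n (2 * i + 3) := Nat.pos_of_ne_zero hA3
    have hS'ne : {k' : ℕ | k - (n - chainE m n 2) < k' ∧
        airFill (m % n) (chainE m n 2) (j - (m - m % n)) k' = true}.Nonempty := by
      by_contra h
      rw [Set.not_nonempty_iff_eq_empty] at h
      rw [h, Nat.sInf_empty] at hsub
      omega
    have hy := Nat.sInf_mem hS'ne
    simp only [Set.mem_setOf_eq] at hy
    rw [hsub] at hy
    obtain ⟨hy1, hy2⟩ := hy
    have hmemS : (k + chainE m n (2 * i + 3)) ∈ {k' : ℕ | k < k' ∧ airFill m n j k' = true} := by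
      simp only [Set.mem_setOf_eq]
      refine ⟨by omega, ?_⟩
      rw [unfoldx _ (by omega)]
      have heq : k + chainE m n (2 * i + 3) - (n - chainE m n 2)
          = k - (n - chainE m n 2) + chainE m n (2 * i + 3) := by omega
      rw [heq]
      exact hy2
    have hup := Nat.sInf_le hmemS
    have hz := Nat.sInf_mem (⟨_, hmemS⟩ :
      {k' : ℕ | k < k' ∧ airFill m n j k' = true}.Nonempty)
    simp only [Set.mem_setOf_eq] at hz
    obtain ⟨hz1, hz2⟩ := hz
    have hz3 : airFill (m % n) (chainE m n 2) (j - (m - m % n))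
        (sInf {k' : ℕ | k < k' ∧ airFill m n j k' = true} - (n - chainE m n 2)) = true := by
      rw [← unfoldx _ (by omega)]
      exact hz2
    have hz4 : (sInf {k' : ℕ | k < k' ∧ airFill m n j k' = true} - (n - chainE m n 2))
        ∈ {k' : ℕ | k - (n - chainE m n 2) < k' ∧
            airFill (m % n) (chainE m n 2) (j - (m - m % n)) k' = true} := by
      simp only [Set.mem_setOf_eq]
      exact ⟨by omega, hz3⟩
    have hz5 := Nat.sInf_le hz4
    rw [hsub] at hz5
    omega

lemma air_GL_main (i m n j k : ℕ) (hn : 0 < n)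
    (hrow : m - chainE m n (2 * i + 1) ≤ j)
    (hcol : n - chainE m n (2 * i) ≤ k)
    (hkR : k % (n - chainE m n (2 * i))
        < (chainE m n (2 * i) / chainE m n (2 * i + 1) - 1) * chainE m n (2 * i + 1))
    (hjk : airFill m n j k = true) :
    sInf {k' : ℕ | k < k' ∧ airFill m n j k' = true} = k + chainE m n (2 * i + 1) := by
  have hkn : k < n := (air_bound n m j k hjk).2
  apply air_GL i m n j k hn hrow hcol ?_ hjk
  rcases i with _ | i'
  · have e0 : chainE m n (2 * 0) = n := rfl
    rw [e0, Nat.sub_self, Nat.mod_zero] at hkR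
    rw [e0, Nat.sub_self]
    omega
  · have hhalf : 2 * chainE m n (2 * i' + 2) ≤ n := chainE_half m n hn (2 * i')
    have h25 : 2 * (i' + 1) = 2 * i' + 2 := by omega
    rw [h25] at hkR hcol ⊢
    have hd : k % (n - chainE m n (2 * i' + 2)) = k - (n - chainE m n (2 * i' + 2)) := by
      rcases Nat.eq_zero_or_pos (n - chainE m n (2 * i' + 2)) with h | h
      · rw [h, Nat.mod_zero]
        omega
      · rw [Nat.mod_eq_sub_mod hcol, Nat.mod_eq_of_lt (by omega)]
    rw [hd] at hkR
    omega

lemma lam_eq_chainE (K D : ℕ) (h1 : D + 1 < K) (h2 : K - D - 1 < D + 1) :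
    ∀ t, lam K D t = chainE K (D + 1) t := by
  intro t
  induction t using Nat.strong_induction_on with
  | _ t ih =>
    match t with
    | 0 => rfl
    | 1 =>
      show K - D - 1 = K % (D + 1)
      have : K % (D + 1) = (K - (D + 1)) % (D + 1) := Nat.mod_eq_sub_mod (by omega)
      rw [this, Nat.mod_eq_of_lt (by omega)]
      omega
    | (t + 2) =>
      show (if lam K D (t + 1) = 0 then 0 else lam K D t % lam K D (t + 1))
          = if chainE K (D + 1) (t + 1) = 0 then 0
            else chainE K (D + 1) t % chainE K (D + 1) (t + 1)
      rw [ih t (by omega), ih (t + 1) (by omega)]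

lemma lam_shift (K D : ℕ) (h1 : D + 1 < K) (h2 : D + 1 < K - D - 1) :
    ∀ t, lam K D (t + 2) = chainE K (D + 1) t := by
  intro t
  induction t using Nat.strong_induction_on with
  | _ t ih =>
    match t with
    | 0 =>
      show (if lam K D 1 = 0 then 0 else lam K D 0 % lam K D 1) = D + 1
      rw [if_neg (show lam K D 1 ≠ 0 from by show K - D - 1 ≠ 0; omega)]
      show (D + 1) % (K - D - 1) = D + 1
      exact Nat.mod_eq_of_lt h2
    | 1 =>
      have l2 : lam K D 2 = D + 1 := ih 0 (by omega)
      show (if lam K D 2 = 0 then 0 else lam K D 1 % lam K D 2) = K % (D + 1)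
      rw [l2, if_neg (by omega)]
      show (K - D - 1) % (D + 1) = K % (D + 1)
      have : K % (D + 1) = (K - (D + 1)) % (D + 1) := Nat.mod_eq_sub_mod (by omega)
      rw [this, show K - (D + 1) = K - D - 1 from by omega]
    | (t + 2) =>
      show (if lam K D (t + 3) = 0 then 0 else lam K D (t + 2) % lam K D (t + 3))
          = if chainE K (D + 1) (t + 1) = 0 then 0
            else chainE K (D + 1) t % chainE K (D + 1) (t + 1)
      rw [ih t (by omega), ih (t + 1) (by omega)]

lemma lam_zero_stable (K D : ℕ) (h : lam K D 2 = 0) : ∀ t, lam K D (t + 2) = 0 := by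
  intro t
  induction t with
  | zero => exact h
  | succ t ih =>
    show (if lam K D (t + 2) = 0 then 0 else lam K D (t + 1) % lam K D (t + 2)) = 0
    rw [if_pos ih]

/-- Right-distance in an even submatrix, first part: if `L(j,k) = 1` lies in the even
submatrix `I_{λ_{2i} × β_{2i}λ_{2i}}` with within-block column index
`k_R ∈ [0, (β_{2i}-1)λ_{2i} - 1]`, then `d_right(j,k) = λ_{2i}`. -/
theorem stmt9 (K D l i j k : ℕ) (hDK : D + 1 < K)
    (hl : lam K D (l + 1) ≠ 0) (hl' : lam K D (l + 2) = 0)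
    (heven : 2*i ≤ l)
    (hrow1 : K - lam K D (2*i+1) ≤ j) (hrow2 : j < K)
    (hcol1 : D + 1 - lam K D (2*i) ≤ k)
    (hkR : k % (D + 1 - lam K D (2*i))
        < (lam K D (2*i) / lam K D (2*i+1) - 1) * lam K D (2*i+1))
    (hjk : airFill K (D+1) j k = true) :
    dright K D j k = lam K D (2*i+1) := by
  have hn : 0 < D + 1 := by omega
  unfold dright
  rcases lt_trichotomy (K - D - 1) (D + 1) with hc | hc | hc
  · -- K < 2(D+1): the lam chain is the chainE chain
    have hlc := lam_eq_chainE K D hDK hc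
    rw [hlc (2*i+1)] at hrow1 ⊢
    rw [hlc (2*i)] at hcol1
    rw [hlc (2*i), hlc (2*i+1)] at hkR
    have h := air_GL_main i K (D+1) j k hn hrow1 hcol1 hkR hjk
    omega
  · -- K = 2(D+1): hkR is contradictory
    exfalso
    rcases i with _ | i'
    · have e0 : lam K D (2*0) = D + 1 := rfl
      have e1 : lam K D (2*0+1) = K - D - 1 := rfl
      rw [e0, e1, hc] at hkR
      rw [Nat.sub_self, Nat.mod_zero, Nat.div_self (by omega), Nat.sub_self, zero_mul] at hkR
      exact Nat.not_lt_zero _ hkR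
    · have hz2 : lam K D 2 = 0 := by
        show (if lam K D 1 = 0 then 0 else lam K D 0 % lam K D 1) = 0
        rw [if_neg (show lam K D 1 ≠ 0 from by show K - D - 1 ≠ 0; omega)]
        show (D + 1) % (K - D - 1) = 0
        rw [hc]
        exact Nat.mod_self _
      have hza : lam K D (2*(i'+1)) = 0 := by
        rw [show 2*(i'+1) = 2*i' + 2 from by omega]
        exact lam_zero_stable K D hz2 _
      have hzb : lam K D (2*(i'+1)+1) = 0 := by
        rw [show 2*(i'+1)+1 = (2*i'+1) + 2 from by omega]
        exact lam_zero_stable K D hz2 _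
      rw [hza, hzb, Nat.zero_div, Nat.zero_sub, zero_mul] at hkR
      exact Nat.not_lt_zero _ hkR
  · -- K > 2(D+1): the lam chain is the chainE chain shifted by two
    have hlc := lam_shift K D hDK hc
    rcases i with _ | i'
    · exfalso
      have e0 : lam K D (2*0) = D + 1 := rfl
      have e1 : lam K D (2*0+1) = K - D - 1 := rfl
      rw [e0, e1] at hkR
      rw [Nat.sub_self, Nat.mod_zero, Nat.div_eq_of_lt hc, Nat.zero_sub, zero_mul] at hkR
      exact Nat.not_lt_zero _ hkR
    · have h26 : 2 * (i' + 1) = 2 * i' + 2 := by omega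
      have h27 : 2 * (i' + 1) + 1 = (2 * i' + 1) + 2 := by omega
      rw [h27, hlc (2*i'+1)] at hrow1 ⊢
      rw [h26] at hcol1 hkR
      rw [hlc (2*i')] at hcol1
      rw [show 2*i'+2+1 = (2*i'+1)+2 from by omega] at hkR
      rw [hlc (2*i'), hlc (2*i'+1)] at hkR
      have h := air_GL_main i' K (D+1) j k hn hrow1 hcol1 hkR hjk
      omega
end
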